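/- arXiv:2208.13153 — 4 statements merged into one kernel-verified Lean document; each statement's English description precedes it below -/
import Mathlib

section
/- Let P be a Markov transition kernel on a finite state space X with metric d bounded above by d_max, and let A ⊆ X×X be such that for each (x,y) ∈ A there is a coupling Q_{xy} of P(x,·) and P(y,·) with E[d(X',Y')] ≤ (1-γ)d(x,y). Then for any jointly distributed initial pair (X₀,Y₀), there is a coupling of the two trajectories of P such that E[d(X_{k+1},Y_{k+1})] ≤ (1-γ)E[d(X_k,Y_k)] + d_max·p_k, where p_k = P((X_k,Y_k) ∉ A); consequently E[d(X_K,Y_K)] ≤ d_max[(1-γ)^K + (sup_{k≤K} p_k)/γ]. -/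
open Finset

noncomputable def iterDist {α : Type*} (f : (α → ℝ) → (α → ℝ)) (μ₀ : α → ℝ) : ℕ → α → ℝ
  | 0 => μ₀
  | n + 1 => f (iterDist f μ₀ n)

theorem stmt_0 {X : Type*} [Fintype X] [DecidableEq X]
    (P : X → X → ℝ)
    (hP : ∀ x, (∀ y, 0 ≤ P x y) ∧ ∑ y, P x y = 1)
    (d : X × X → ℝ) (dmax : ℝ)
    (hd : ∀ z, 0 ≤ d z) (hdmax : ∀ z, d z ≤ dmax)
    (A : Finset (X × X)) (γ : ℝ) (hγ : 0 < γ) (hγ1 : γ < 1)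
    (hQ : ∀ x y, (x, y) ∈ A → ∃ Q : X × X → ℝ,
      (∀ z, 0 ≤ Q z) ∧
      (∀ x', ∑ y', Q (x', y') = P x x') ∧
      (∀ y', ∑ x', Q (x', y') = P y y') ∧
      ∑ z, Q z * d z ≤ (1 - γ) * d (x, y))
    (μ₀ : X × X → ℝ) (hμ₀ : (∀ z, 0 ≤ μ₀ z) ∧ ∑ z, μ₀ z = 1) :
    ∃ μ : ℕ → X × X → ℝ,
      μ 0 = μ₀ ∧
      (∀ k, (∀ z, 0 ≤ μ k z) ∧ ∑ z, μ k z = 1) ∧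
      (∀ k x', ∑ y', μ (k + 1) (x', y') = ∑ x, (∑ y, μ k (x, y)) * P x x') ∧
      (∀ k y', ∑ x', μ (k + 1) (x', y') = ∑ y, (∑ x, μ k (x, y)) * P y y') ∧
      (∀ k, ∑ z, μ (k + 1) z * d z ≤
        (1 - γ) * ∑ z, μ k z * d z + dmax * ∑ z ∈ Aᶜ, μ k z) ∧
      (∀ K pbar, (∀ k ≤ K, ∑ z ∈ Aᶜ, μ k z ≤ pbar) →
        ∑ z, μ K z * d z ≤ dmax * ((1 - γ) ^ K + pbar / γ)) := by
  classical
  have hne : Nonempty X := by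
    by_contra h
    rw [not_nonempty_iff] at h
    have h2 := hμ₀.2
    rw [Finset.univ_eq_empty, Finset.sum_empty] at h2
    norm_num at h2
  obtain ⟨x₀⟩ := hne
  have hdmax0 : 0 ≤ dmax := le_trans (hd (x₀, x₀)) (hdmax (x₀, x₀))
  choose Q hQ0 hQm1 hQm2 hQd using hQ
  set Kk : X × X → X × X → ℝ := fun z z' =>
    if h : z ∈ A then Q z.1 z.2 h z' else P z.1 z'.1 * P z.2 z'.2 with hKk
  have hK0 : ∀ z z', 0 ≤ Kk z z' := by
    intro z z'
    by_cases h : z ∈ A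
    · simp only [hKk, dif_pos h]; exact hQ0 _ _ _ _
    · simp only [hKk, dif_neg h]; exact mul_nonneg ((hP z.1).1 _) ((hP z.2).1 _)
  have hKm1 : ∀ z x', ∑ y', Kk z (x', y') = P z.1 x' := by
    intro z x'
    by_cases h : z ∈ A
    · simp only [hKk, dif_pos h]; exact hQm1 _ _ h x'
    · simp only [hKk, dif_neg h]
      rw [← Finset.mul_sum, (hP z.2).2, mul_one]
  have hKm2 : ∀ z y', ∑ x', Kk z (x', y') = P z.2 y' := by
    intro z y'
    by_cases h : z ∈ A
    · simp only [hKk, dif_pos h]; exact hQm2 _ _ h y'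
    · simp only [hKk, dif_neg h]
      rw [← Finset.sum_mul, (hP z.1).2, one_mul]
  have hKsum : ∀ z, ∑ z', Kk z z' = 1 := by
    intro z
    rw [Fintype.sum_prod_type]
    simp_rw [hKm1]
    exact (hP z.1).2
  have hKdmax : ∀ z, ∑ z', Kk z z' * d z' ≤ dmax := by
    intro z
    calc ∑ z', Kk z z' * d z' ≤ ∑ z', Kk z z' * dmax :=
          Finset.sum_le_sum fun z' _ => mul_le_mul_of_nonneg_left (hdmax z') (hK0 z z')
      _ = dmax := by rw [← Finset.sum_mul, hKsum, one_mul]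
  have hKd : ∀ z ∈ A, ∑ z', Kk z z' * d z' ≤ (1 - γ) * d z := by
    intro z hz
    have := hQd z.1 z.2 hz
    simpa only [hKk, dif_pos hz] using this
  set μ : ℕ → X × X → ℝ := iterDist (fun prev z' => ∑ z, prev z * Kk z z') μ₀ with hμ
  have hstep : ∀ k z', μ (k + 1) z' = ∑ z, μ k z * Kk z z' := by
    intro k z'
    rw [hμ]
    rfl
  have hprob : ∀ k, (∀ z, 0 ≤ μ k z) ∧ ∑ z, μ k z = 1 := by
    intro k
    induction k with
    | zero => exact hμ₀
    | succ k ih =>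
      constructor
      · intro z'
        rw [hstep]
        exact Finset.sum_nonneg fun z _ => mul_nonneg (ih.1 z) (hK0 z z')
      · simp_rw [hstep]
        rw [Finset.sum_comm]
        simp_rw [← Finset.mul_sum, hKsum, mul_one]
        exact ih.2
  have hmarg1 : ∀ k x', ∑ y', μ (k + 1) (x', y') = ∑ x, (∑ y, μ k (x, y)) * P x x' := by
    intro k x'
    calc ∑ y', μ (k + 1) (x', y') = ∑ y', ∑ z, μ k z * Kk z (x', y') := by simp_rw [hstep]
      _ = ∑ z, ∑ y', μ k z * Kk z (x', y') := Finset.sum_comm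
      _ = ∑ z, μ k z * P z.1 x' := by simp_rw [← Finset.mul_sum, hKm1]
      _ = ∑ x, ∑ y, μ k (x, y) * P x x' := by rw [Fintype.sum_prod_type]
      _ = ∑ x, (∑ y, μ k (x, y)) * P x x' := by simp_rw [Finset.sum_mul]
  have hmarg2 : ∀ k y', ∑ x', μ (k + 1) (x', y') = ∑ y, (∑ x, μ k (x, y)) * P y y' := by
    intro k y'
    calc ∑ x', μ (k + 1) (x', y') = ∑ x', ∑ z, μ k z * Kk z (x', y') := by simp_rw [hstep]
      _ = ∑ z, ∑ x', μ k z * Kk z (x', y') := Finset.sum_comm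
      _ = ∑ z, μ k z * P z.2 y' := by simp_rw [← Finset.mul_sum, hKm2]
      _ = ∑ x, ∑ y, μ k (x, y) * P y y' := by rw [Fintype.sum_prod_type]
      _ = ∑ y, ∑ x, μ k (x, y) * P y y' := Finset.sum_comm
      _ = ∑ y, (∑ x, μ k (x, y)) * P y y' := by simp_rw [Finset.sum_mul]
  have hcontr : ∀ k, ∑ z, μ (k + 1) z * d z ≤
      (1 - γ) * ∑ z, μ k z * d z + dmax * ∑ z ∈ Aᶜ, μ k z := by
    intro k
    have h1 : ∑ z', μ (k + 1) z' * d z' = ∑ z, μ k z * ∑ z', Kk z z' * d z' := by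
      simp_rw [hstep, Finset.sum_mul]
      rw [Finset.sum_comm]
      simp_rw [Finset.mul_sum, mul_assoc]
    rw [h1, ← Finset.sum_add_sum_compl A (fun z => μ k z * ∑ z', Kk z z' * d z')]
    have hA : ∑ z ∈ A, μ k z * ∑ z', Kk z z' * d z' ≤ (1 - γ) * ∑ z, μ k z * d z := by
      calc ∑ z ∈ A, μ k z * ∑ z', Kk z z' * d z'
          ≤ ∑ z ∈ A, μ k z * ((1 - γ) * d z) :=
            Finset.sum_le_sum fun z hz => mul_le_mul_of_nonneg_left (hKd z hz) ((hprob k).1 z)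
        _ ≤ ∑ z, μ k z * ((1 - γ) * d z) :=
            Finset.sum_le_sum_of_subset_of_nonneg (Finset.subset_univ A)
              (fun z _ _ => mul_nonneg ((hprob k).1 z)
                (mul_nonneg (by linarith) (hd z)))
        _ = (1 - γ) * ∑ z, μ k z * d z := by
            rw [Finset.mul_sum]; apply Finset.sum_congr rfl; intro z _; ring
    have hB : ∑ z ∈ Aᶜ, μ k z * ∑ z', Kk z z' * d z' ≤ dmax * ∑ z ∈ Aᶜ, μ k z := by
      rw [Finset.mul_sum]
      refine Finset.sum_le_sum fun z _ => ?_
      calc μ k z * ∑ z', Kk z z' * d z' ≤ μ k z * dmax :=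
            mul_le_mul_of_nonneg_left (hKdmax z) ((hprob k).1 z)
        _ = dmax * μ k z := mul_comm _ _
    linarith
  have hmain : ∀ K pbar, (∀ k ≤ K, ∑ z ∈ Aᶜ, μ k z ≤ pbar) →
      ∑ z, μ K z * d z ≤ dmax * (1 - γ) ^ K +
        dmax * pbar * ∑ j ∈ Finset.range K, (1 - γ) ^ j := by
    intro K
    induction K with
    | zero =>
      intro pbar _
      simp only [pow_zero, Finset.range_zero, Finset.sum_empty, mul_zero, mul_one, add_zero]
      calc ∑ z, μ 0 z * d z ≤ ∑ z, μ 0 z * dmax :=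
            Finset.sum_le_sum fun z _ =>
              mul_le_mul_of_nonneg_left (hdmax z) ((hprob 0).1 z)
        _ = dmax := by rw [← Finset.sum_mul, (hprob 0).2, one_mul]
    | succ K ih =>
      intro pbar hpbar
      have h1 := hcontr K
      have h2 := ih pbar (fun k hk => hpbar k (le_trans hk (Nat.le_succ K)))
      have h3 : ∑ z ∈ Aᶜ, μ K z ≤ pbar := hpbar K (Nat.le_succ K)
      have hγ' : (0:ℝ) ≤ 1 - γ := by linarith
      have hstep2 : ∑ z, μ (K + 1) z * d z ≤
          (1 - γ) * (dmax * (1 - γ) ^ K +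
            dmax * pbar * ∑ j ∈ Finset.range K, (1 - γ) ^ j) + dmax * pbar := by
        have h4 := mul_le_mul_of_nonneg_left h2 hγ'
        have h5 := mul_le_mul_of_nonneg_left h3 hdmax0
        linarith
      refine le_trans hstep2 (le_of_eq ?_)
      rw [geom_sum_succ]
      ring
  refine ⟨μ, rfl, hprob, hmarg1, hmarg2, hcontr, ?_⟩
  intro K pbar hpbar
  have h := hmain K pbar hpbar
  have hpbar0 : 0 ≤ pbar :=
    le_trans (Finset.sum_nonneg fun z _ => (hprob 0).1 z) (hpbar 0 (Nat.zero_le _))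
  have hp : (0:ℝ) ≤ (1 - γ) ^ K := pow_nonneg (by linarith) K
  have hS : ∑ j ∈ Finset.range K, (1 - γ) ^ j ≤ 1 / γ := by
    rw [geom_sum_eq (ne_of_lt (by linarith : (1:ℝ) - γ < 1))]
    have heq : ((1 - γ) ^ K - 1) / (1 - γ - 1) = (1 - (1 - γ) ^ K) / γ := by
      rw [div_eq_div_iff (ne_of_lt (by linarith : (1:ℝ) - γ - 1 < 0)) (ne_of_gt hγ)]
      ring
    rw [heq]
    gcongr
    linarith
  have hSmul : dmax * pbar * ∑ j ∈ Finset.range K, (1 - γ) ^ j ≤ dmax * pbar * (1 / γ) :=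
    mul_le_mul_of_nonneg_left hS (mul_nonneg hdmax0 hpbar0)
  calc ∑ z, μ K z * d z ≤ dmax * (1 - γ) ^ K +
        dmax * pbar * ∑ j ∈ Finset.range K, (1 - γ) ^ j := h
    _ ≤ dmax * (1 - γ) ^ K + dmax * pbar * (1 / γ) := by linarith
    _ = dmax * ((1 - γ) ^ K + pbar / γ) := by ring
end

section
/- Let G be a connected finite simple graph with |E| ≥ 2 edges and degree sequence (d_i). Then there exists a continuous function ζ : [0,1] → ℝ≥0, depending only on G, with ζ(x) > 0 for x ≠ 0, and a constant C depending only on the degrees and |E|, such that for all p,q ∈ [0,1]: 2q^{|E|} + (|V|−2)p^{|E|} − C|p−q| ≤ ∑_i q^{d_i} p^{|E|−d_i} ≤ 2q^{|E|} + (|V|−2)p^{|E|} − ζ(|p−q|). -/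
open Finset


private lemma aux_pow_sub_pow_ge (x y : ℝ) (hy : 0 ≤ y) (hxy : y ≤ x) :
    ∀ k : ℕ, ((k : ℝ) + 1) * y ^ k * (x - y) ≤ x ^ (k + 1) - y ^ (k + 1) := by
  intro k
  induction k with
  | zero => simp
  | succ k ih =>
    have hx : 0 ≤ x := hy.trans hxy
    have h1 : 0 ≤ x - y := sub_nonneg.2 hxy
    have hA := mul_le_mul_of_nonneg_left ih hx
    have h2 : y * y ^ k ≤ x * y ^ k := mul_le_mul_of_nonneg_right hxy (pow_nonneg hy k)
    have hB := mul_le_mul_of_nonneg_right h2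
      (mul_nonneg (by positivity : (0:ℝ) ≤ (k:ℝ)+1) h1)
    have key : x ^ (k+1+1) - y ^ (k+1+1) - (((k:ℝ)+1+1) * y ^ (k+1) * (x - y))
        = (x * (x ^ (k+1) - y ^ (k+1)) - x * (((k:ℝ)+1) * y ^ k * (x - y)))
          + ((x * y ^ k) * (((k:ℝ)+1) * (x - y)) - (y * y ^ k) * (((k:ℝ)+1) * (x - y))) := by
      ring
    push_cast
    linarith [hA, hB, key]

private lemma aux_superadd (x y : ℝ) (hy : 0 ≤ y) (hxy : y ≤ x) :
    ∀ n : ℕ, (x - y) ^ (n + 1) + y ^ (n + 1) ≤ x ^ (n + 1) := by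
  intro n
  induction n with
  | zero => simp
  | succ n ih =>
    have hx : 0 ≤ x := hy.trans hxy
    have h1 : 0 ≤ x - y := sub_nonneg.2 hxy
    calc (x - y) ^ (n + 1 + 1) + y ^ (n + 1 + 1)
        = (x - y) * (x - y) ^ (n + 1) + y * y ^ (n + 1) := by ring
      _ ≤ x * (x - y) ^ (n + 1) + x * y ^ (n + 1) :=
          add_le_add (mul_le_mul_of_nonneg_right (by linarith) (pow_nonneg h1 _))
            (mul_le_mul_of_nonneg_right hxy (pow_nonneg hy _))
      _ = x * ((x - y) ^ (n + 1) + y ^ (n + 1)) := by ring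
      _ ≤ x * x ^ (n + 1) := mul_le_mul_of_nonneg_left ih hx
      _ = x ^ (n + 1 + 1) := by ring

private lemma aux_baseA (x y : ℝ) (hy : 0 ≤ y) (hxy : y ≤ x) :
    ∀ k : ℕ, (x - y) ^ (k + 2) + ((k : ℝ) + 2) * (x * y ^ (k + 1)) ≤
      x ^ (k + 2) + ((k : ℝ) + 1) * y ^ (k + 2) := by
  intro k
  induction k with
  | zero => push_cast; nlinarith [sq_nonneg (x - y)]
  | succ k ih =>
    have h1 : 0 ≤ x - y := sub_nonneg.2 hxy
    have hs := aux_superadd x y hy hxy (k + 1)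
    have t1 : 0 ≤ y * (x ^ (k+2) + ((k:ℝ)+1) * y ^ (k+2)
        - ((x - y) ^ (k + 2) + ((k : ℝ) + 2) * (x * y ^ (k + 1)))) :=
      mul_nonneg hy (by linarith)
    have t2 : 0 ≤ (x - y) * (x ^ (k+2) - y ^ (k+2) - (x - y) ^ (k+2)) :=
      mul_nonneg h1 (by linarith)
    have t3 : 0 ≤ y * (x - y) ^ (k + 2) := mul_nonneg hy (pow_nonneg h1 _)
    have key : x ^ (k+1+2) + ((k:ℝ)+1+1) * y ^ (k+1+2)
        - ((x - y) ^ (k+1+2) + ((k:ℝ)+1+2) * (x * y ^ (k+1+1)))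
        = y * (x ^ (k+2) + ((k:ℝ)+1) * y ^ (k+2)
            - ((x - y) ^ (k + 2) + ((k : ℝ) + 2) * (x * y ^ (k + 1))))
          + (x - y) * (x ^ (k+2) - y ^ (k+2) - (x - y) ^ (k+2))
          + y * (x - y) ^ (k + 2) := by
      ring
    push_cast
    linarith [t1, t2, t3, key]

private lemma aux_lemA (x y : ℝ) (hy : 0 ≤ y) (hxy : y ≤ x) :
    ∀ m k : ℕ, (x - y) ^ (m + k + 2) + ((m : ℝ) + k + 2) * (x ^ (m + 1) * y ^ (k + 1)) ≤
      ((m : ℝ) + 1) * x ^ (m + k + 2) + ((k : ℝ) + 1) * y ^ (m + k + 2) := by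
  intro m
  induction m with
  | zero =>
    intro k
    have h := aux_baseA x y hy hxy k
    have e : 0 + k + 2 = k + 2 := by omega
    rw [e]
    push_cast
    have key : ((0:ℝ) + 1) * x ^ (k + 2) + ((k:ℝ) + 1) * y ^ (k + 2)
        - ((x - y) ^ (k + 2) + ((0:ℝ) + (k:ℝ) + 2) * (x ^ (0 + 1) * y ^ (k + 1)))
        = x ^ (k+2) + ((k:ℝ)+1) * y ^ (k+2)
          - ((x - y) ^ (k + 2) + ((k : ℝ) + 2) * (x * y ^ (k + 1))) := by ring
    linarith [h, key]
  | succ m ih =>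
    intro k
    have hx : 0 ≤ x := hy.trans hxy
    have h1 : 0 ≤ x - y := sub_nonneg.2 hxy
    have ihk := ih k
    have h2 := aux_pow_sub_pow_ge x y hy hxy k
    have h3 : y ^ (m + 2) ≤ x ^ (m + 2) := pow_le_pow_left₀ hy hxy (m + 2)
    have u1 : 0 ≤ x * (((m : ℝ) + 1) * x ^ (m + k + 2) + ((k : ℝ) + 1) * y ^ (m + k + 2)
        - ((x - y) ^ (m + k + 2) + ((m : ℝ) + k + 2) * (x ^ (m + 1) * y ^ (k + 1)))) :=
      mul_nonneg hx (by linarith)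
    have u2 : 0 ≤ x ^ (m+2) * ((x ^ (k+1) - y ^ (k+1)) - ((k:ℝ)+1) * y ^ k * (x - y)) :=
      mul_nonneg (pow_nonneg hx _) (by linarith)
    have u3 : 0 ≤ ((x ^ (m+2) - y ^ (m+2)) * y ^ k) * (((k:ℝ)+1) * (x - y)) :=
      mul_nonneg (mul_nonneg (by linarith) (pow_nonneg hy k))
        (mul_nonneg (by positivity) h1)
    have u4 : 0 ≤ y * (x - y) ^ (m + k + 2) := mul_nonneg hy (pow_nonneg h1 _)
    have key : ((m:ℝ)+1+1) * x ^ (m+1+k+2) + ((k:ℝ)+1) * y ^ (m+1+k+2)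
        - ((x - y) ^ (m+1+k+2) + ((m:ℝ)+1+(k:ℝ)+2) * (x ^ (m+1+1) * y ^ (k+1)))
        = x * (((m : ℝ) + 1) * x ^ (m + k + 2) + ((k : ℝ) + 1) * y ^ (m + k + 2)
            - ((x - y) ^ (m + k + 2) + ((m : ℝ) + k + 2) * (x ^ (m + 1) * y ^ (k + 1))))
          + x ^ (m+2) * ((x ^ (k+1) - y ^ (k+1)) - ((k:ℝ)+1) * y ^ k * (x - y))
          + ((x ^ (m+2) - y ^ (m+2)) * y ^ k) * (((k:ℝ)+1) * (x - y))
          + y * (x - y) ^ (m + k + 2) := by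
      ring
    push_cast
    linarith [u1, u2, u3, u4, key]

/-- Young's inequality for natural exponents, with remainder when `1 ≤ d < E`. -/
private lemma aux_youngStrong (E d : ℕ) (hd1 : 1 ≤ d) (hd2 : d < E) (p q : ℝ)
    (hp : 0 ≤ p) (hq : 0 ≤ q) :
    (E : ℝ) * (q ^ d * p ^ (E - d)) + |p - q| ^ E ≤
      (d : ℝ) * q ^ E + ((E : ℝ) - d) * p ^ E := by
  have c1 : ((d - 1 : ℕ) : ℝ) = (d : ℝ) - 1 := by
    rw [Nat.cast_sub hd1]; norm_num
  have c2 : ((E - d - 1 : ℕ) : ℝ) = (E : ℝ) - (d : ℝ) - 1 := by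
    have e : E - d - 1 = E - (d + 1) := by omega
    rw [e, Nat.cast_sub (by omega)]; push_cast; ring
  rcases le_total p q with h | h
  · have this1 := aux_lemA q p hp h (d - 1) (E - d - 1)
    have hm : d - 1 + 1 = d := by omega
    have hk : E - d - 1 + 1 = E - d := by omega
    have hn : d - 1 + (E - d - 1) + 2 = E := by omega
    rw [hm, hk, hn, c1, c2] at this1
    have habs : |p - q| = q - p := by rw [abs_sub_comm]; exact abs_of_nonneg (by linarith)
    rw [habs]
    linarith [this1]
  · have this1 := aux_lemA p q hq h (E - d - 1) (d - 1)
    have hm : E - d - 1 + 1 = E - d := by omega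
    have hk : d - 1 + 1 = d := by omega
    have hn : E - d - 1 + (d - 1) + 2 = E := by omega
    rw [hm, hk, hn, c1, c2] at this1
    have habs : |p - q| = p - q := abs_of_nonneg (by linarith)
    rw [habs]
    linarith [this1]

/-- Young's inequality for natural exponents, `0 ≤ d ≤ E`. -/
private lemma aux_young (E d : ℕ) (hd : d ≤ E) (p q : ℝ) (hp : 0 ≤ p) (hq : 0 ≤ q) :
    (E : ℝ) * (q ^ d * p ^ (E - d)) ≤ (d : ℝ) * q ^ E + ((E : ℝ) - d) * p ^ E := by
  rcases Nat.eq_zero_or_pos d with h0 | h1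
  · subst h0; simp
  rcases eq_or_lt_of_le hd with hEd | hlt
  · subst hEd; simp
  · have h := aux_youngStrong E d h1 hlt p q hp hq
    have habs : 0 ≤ |p - q| ^ E := pow_nonneg (abs_nonneg _) E
    linarith

/-- Lipschitz bound for powers on `[0,1]`. -/
private lemma aux_powLip (a b : ℝ) (hb : 0 ≤ b) (hba : b ≤ a) (ha1 : a ≤ 1) :
    ∀ s : ℕ, a ^ s - b ^ s ≤ (s : ℝ) * (a - b) := by
  intro s
  induction s with
  | zero => simp
  | succ s ih =>
    have has : a ^ s ≤ 1 := pow_le_one₀ (hb.trans hba) ha1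
    have hab : 0 ≤ a - b := sub_nonneg.2 hba
    have t1 : 0 ≤ (1 - a ^ s) * (a - b) := mul_nonneg (by linarith) hab
    have t2 : 0 ≤ b * ((s : ℝ) * (a - b) - (a ^ s - b ^ s)) := mul_nonneg hb (by linarith)
    have t3 : 0 ≤ (1 - b) * ((s : ℝ) * (a - b)) := by
      have hb1 : b ≤ 1 := hba.trans ha1
      exact mul_nonneg (by linarith) (mul_nonneg (Nat.cast_nonneg s) hab)
    have key : ((s:ℝ) + 1) * (a - b) - (a ^ (s+1) - b ^ (s+1))
        = (1 - a ^ s) * (a - b) + b * ((s : ℝ) * (a - b) - (a ^ s - b ^ s))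
          + (1 - b) * ((s : ℝ) * (a - b)) := by ring
    push_cast
    linarith [t1, t2, t3, key]

/-- Reverse (Lipschitz) bound for Young's inequality on `[0,1]`. -/
private lemma aux_lip (E d : ℕ) (hd : d ≤ E) (p q : ℝ)
    (hp : 0 ≤ p) (hp1 : p ≤ 1) (hq : 0 ≤ q) (hq1 : q ≤ 1) :
    (d : ℝ) * q ^ E + ((E : ℝ) - d) * p ^ E ≤
      (E : ℝ) * (q ^ d * p ^ (E - d)) + 2 * (E : ℝ) ^ 2 * |p - q| := by
  have hqE : q ^ d * q ^ (E - d) = q ^ E := by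
    rw [← pow_add]; congr 1; omega
  have hpE : p ^ (E - d) * p ^ d = p ^ E := by
    rw [← pow_add]; congr 1; omega
  have hdR : (d : ℝ) ≤ (E : ℝ) := by exact_mod_cast hd
  have hdnn : (0 : ℝ) ≤ d := Nat.cast_nonneg d
  have hEnn : (0 : ℝ) ≤ E := Nat.cast_nonneg E
  have hEd : (0 : ℝ) ≤ (E : ℝ) - d := by linarith
  have hqd1 : q ^ d ≤ 1 := pow_le_one₀ hq hq1
  have hpd1 : p ^ (E - d) ≤ 1 := pow_le_one₀ hp hp1
  have hqdnn : 0 ≤ q ^ d := pow_nonneg hq d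
  have hpdnn : 0 ≤ p ^ (E - d) := pow_nonneg hp (E - d)
  have keyid : (d : ℝ) * (q ^ E - q ^ d * p ^ (E - d))
      + ((E : ℝ) - d) * (p ^ E - q ^ d * p ^ (E - d))
      = (d : ℝ) * q ^ E + ((E : ℝ) - d) * p ^ E - (E : ℝ) * (q ^ d * p ^ (E - d)) := by
    ring
  rcases le_total p q with h | h
  · have habs : |p - q| = q - p := by rw [abs_sub_comm]; exact abs_of_nonneg (by linarith)
    rw [habs]
    have l1 : q ^ (E - d) - p ^ (E - d) ≤ ((E - d : ℕ) : ℝ) * (q - p) :=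
      aux_powLip q p hp h hq1 (E - d)
    have l1' : ((E - d : ℕ) : ℝ) ≤ (E : ℝ) := by exact_mod_cast Nat.sub_le E d
    have k1 : q ^ E - q ^ d * p ^ (E - d) ≤ (E : ℝ) * (q - p) := by
      have e1 : q ^ E - q ^ d * p ^ (E - d) = q ^ d * (q ^ (E - d) - p ^ (E - d)) := by
        rw [← hqE]; ring
      rw [e1]
      have hnn : 0 ≤ q ^ (E - d) - p ^ (E - d) :=
        sub_nonneg.2 (pow_le_pow_left₀ hp h (E - d))
      calc q ^ d * (q ^ (E - d) - p ^ (E - d)) ≤ 1 * (q ^ (E - d) - p ^ (E - d)) :=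
            mul_le_mul_of_nonneg_right hqd1 hnn
        _ = q ^ (E - d) - p ^ (E - d) := one_mul _
        _ ≤ ((E - d : ℕ) : ℝ) * (q - p) := l1
        _ ≤ (E : ℝ) * (q - p) := mul_le_mul_of_nonneg_right l1' (by linarith)
    have k2 : p ^ E - q ^ d * p ^ (E - d) ≤ 0 := by
      have e2 : p ^ E - q ^ d * p ^ (E - d) = p ^ (E - d) * (p ^ d - q ^ d) := by
        rw [← hpE]; ring
      rw [e2]
      exact mul_nonpos_of_nonneg_of_nonpos hpdnn
        (by linarith [pow_le_pow_left₀ hp h d])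
    have A := mul_le_mul_of_nonneg_left k1 hdnn
    have B := mul_le_mul_of_nonneg_left k2 hEd
    have t : 0 ≤ ((E : ℝ) * (2 * (E : ℝ) - d)) * (q - p) :=
      mul_nonneg (mul_nonneg hEnn (by linarith)) (by linarith)
    have key2 : 2 * (E : ℝ) ^ 2 * (q - p) - (d : ℝ) * ((E : ℝ) * (q - p))
        = ((E : ℝ) * (2 * (E : ℝ) - d)) * (q - p) := by ring
    linarith [A, B, t, keyid, key2]
  · have habs : |p - q| = p - q := abs_of_nonneg (by linarith)
    rw [habs]
    have l1 : p ^ d - q ^ d ≤ ((d : ℕ) : ℝ) * (p - q) := aux_powLip p q hq h hp1 d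
    have k1 : q ^ E - q ^ d * p ^ (E - d) ≤ 0 := by
      have e1 : q ^ E - q ^ d * p ^ (E - d) = q ^ d * (q ^ (E - d) - p ^ (E - d)) := by
        rw [← hqE]; ring
      rw [e1]
      exact mul_nonpos_of_nonneg_of_nonpos hqdnn
        (by linarith [pow_le_pow_left₀ hq h (E - d)])
    have k2 : p ^ E - q ^ d * p ^ (E - d) ≤ (E : ℝ) * (p - q) := by
      have e2 : p ^ E - q ^ d * p ^ (E - d) = p ^ (E - d) * (p ^ d - q ^ d) := by
        rw [← hpE]; ring
      rw [e2]
      have hnn : 0 ≤ p ^ d - q ^ d := sub_nonneg.2 (pow_le_pow_left₀ hq h d)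
      calc p ^ (E - d) * (p ^ d - q ^ d) ≤ 1 * (p ^ d - q ^ d) :=
            mul_le_mul_of_nonneg_right hpd1 hnn
        _ = p ^ d - q ^ d := one_mul _
        _ ≤ ((d : ℕ) : ℝ) * (p - q) := l1
        _ ≤ (E : ℝ) * (p - q) := mul_le_mul_of_nonneg_right hdR (by linarith)
    have A := mul_le_mul_of_nonneg_left k2 hEd
    have B := mul_le_mul_of_nonneg_left k1 hdnn
    have t : 0 ≤ ((E : ℝ) * ((E : ℝ) + d)) * (p - q) :=
      mul_nonneg (mul_nonneg hEnn (by linarith)) (by linarith)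
    have key2 : 2 * (E : ℝ) ^ 2 * (p - q) - ((E : ℝ) - d) * ((E : ℝ) * (p - q))
        = ((E : ℝ) * ((E : ℝ) + d)) * (p - q) := by ring
    linarith [A, B, t, keyid, key2]

theorem stmt_5 {V : Type*} [Fintype V] [DecidableEq V]
    (G : SimpleGraph V) [DecidableRel G.Adj]
    (hconn : G.Connected) (hE : 2 ≤ G.edgeFinset.card) :
    ∃ ζ : ℝ → ℝ, ContinuousOn ζ (Set.Icc 0 1) ∧
      (∀ x ∈ Set.Icc (0 : ℝ) 1, 0 ≤ ζ x) ∧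
      (∀ x ∈ Set.Icc (0 : ℝ) 1, x ≠ 0 → 0 < ζ x) ∧
      ∃ C : ℝ, ∀ p q : ℝ, p ∈ Set.Icc (0 : ℝ) 1 → q ∈ Set.Icc (0 : ℝ) 1 →
        (2 * q ^ G.edgeFinset.card + ((Fintype.card V : ℝ) - 2) * p ^ G.edgeFinset.card
            - C * |p - q| ≤
          ∑ v, q ^ (G.degree v) * p ^ (G.edgeFinset.card - G.degree v)) ∧
        (∑ v, q ^ (G.degree v) * p ^ (G.edgeFinset.card - G.degree v) ≤
          2 * q ^ G.edgeFinset.card + ((Fintype.card V : ℝ) - 2) * p ^ G.edgeFinset.card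
            - ζ |p - q|) := by
  classical
  set E := G.edgeFinset.card with hEdef
  set N := Fintype.card V with hNdef
  have hE0 : 0 < E := by omega
  have hER : (0 : ℝ) < E := by exact_mod_cast hE0
  -- degrees are at most E
  have hdle : ∀ v, G.degree v ≤ E := by
    intro v
    rw [← G.card_incidenceFinset_eq_degree]
    apply Finset.card_le_card
    intro e he
    rw [SimpleGraph.mem_incidenceFinset] at he
    exact SimpleGraph.mem_edgeFinset.2 he.1
  -- handshake
  have hsum : ∑ v, G.degree v = 2 * E := G.sum_degrees_eq_twice_card_edges
  -- a vertex j with 1 ≤ degree j < E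
  obtain ⟨e, he⟩ : G.edgeFinset.Nonempty := Finset.card_pos.1 (by omega)
  have hj : ∃ j, 1 ≤ G.degree j ∧ G.degree j < E := by
    induction e using Sym2.ind with
    | _ u w =>
      have hadj : G.Adj u w := SimpleGraph.mem_edgeFinset.1 he
      have hfull : ∀ a : V, G.degree a = E → ∀ e' ∈ G.edgeFinset, a ∈ e' := by
        intro a ha e' he'
        have hsub : G.incidenceFinset a ⊆ G.edgeFinset := by
          intro f hf
          rw [SimpleGraph.mem_incidenceFinset] at hf
          exact SimpleGraph.mem_edgeFinset.2 hf.1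
        have hcard : G.edgeFinset.card ≤ (G.incidenceFinset a).card := by
          rw [G.card_incidenceFinset_eq_degree, ha]
        have heq : G.incidenceFinset a = G.edgeFinset :=
          Finset.eq_of_subset_of_card_le hsub hcard
        rw [← heq] at he'
        rw [SimpleGraph.mem_incidenceFinset] at he'
        exact he'.2
      by_cases hu : G.degree u < E
      · exact ⟨u, (G.degree_pos_iff_exists_adj u).2 ⟨w, hadj⟩, hu⟩
      · by_cases hw : G.degree w < E
        · exact ⟨w, (G.degree_pos_iff_exists_adj w).2 ⟨u, hadj.symm⟩, hw⟩
        · exfalso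
          have hu' : G.degree u = E := le_antisymm (hdle u) (not_lt.1 hu)
          have hw' : G.degree w = E := le_antisymm (hdle w) (not_lt.1 hw)
          have hsub : G.edgeFinset ⊆ {s(u, w)} := by
            intro e' he'
            have h1 := hfull u hu' e' he'
            have h2 := hfull w hw' e' he'
            induction e' using Sym2.ind with
            | _ a b =>
              rw [Sym2.mem_iff] at h1 h2
              rw [Finset.mem_singleton, Sym2.eq_iff]
              have hne := hadj.ne
              rcases h1 with h1 | h1 <;> rcases h2 with h2 | h2 <;>
                first
                  | (exact absurd (h1 ▸ h2) (by subst h1; simp_all))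
                  | (subst h1; subst h2; tauto)
          have : G.edgeFinset.card ≤ 1 := by
            calc G.edgeFinset.card ≤ ({s(u, w)} : Finset (Sym2 V)).card :=
                  Finset.card_le_card hsub
              _ = 1 := Finset.card_singleton _
          omega
  obtain ⟨j, hj1, hj2⟩ := hj
  refine ⟨fun x => x ^ E / E, ?_, ?_, ?_, 2 * N * E, ?_⟩
  · exact (Continuous.div_const (continuous_pow E) _).continuousOn
  · intro x hx
    exact div_nonneg (pow_nonneg hx.1 E) hER.le
  · intro x hx hx0
    exact div_pos (pow_pos (lt_of_le_of_ne hx.1 (Ne.symm hx0)) E) hER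
  intro p q hp hq
  obtain ⟨hp0, hp1⟩ := hp
  obtain ⟨hq0, hq1⟩ := hq
  have habs0 : (0:ℝ) ≤ |p - q| := abs_nonneg _
  -- the "target" sum
  have hS : ∑ v, ((G.degree v : ℝ) * q ^ E + ((E : ℝ) - G.degree v) * p ^ E)
      = 2 * (E : ℝ) * q ^ E + ((N : ℝ) * E - 2 * E) * p ^ E := by
    rw [Finset.sum_add_distrib, ← Finset.sum_mul, ← Finset.sum_mul]
    have h1 : ∑ v, (G.degree v : ℝ) = 2 * (E : ℝ) := by
      rw [← Nat.cast_sum]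
      exact_mod_cast congrArg (Nat.cast : ℕ → ℝ) hsum
    have h2 : ∑ v, ((E : ℝ) - G.degree v) = (N : ℝ) * E - 2 * E := by
      rw [Finset.sum_sub_distrib, Finset.sum_const, h1, Finset.card_univ]
      push_cast [hNdef]
      ring
    rw [h1, h2]
  constructor
  · -- lower bound
    have key : ∀ v, (G.degree v : ℝ) * q ^ E + ((E : ℝ) - G.degree v) * p ^ E ≤
        (E : ℝ) * (q ^ G.degree v * p ^ (E - G.degree v)) + 2 * (E : ℝ) ^ 2 * |p - q| :=
      fun v => aux_lip E (G.degree v) (hdle v) p q hp0 hp1 hq0 hq1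
    have hsumkey := Finset.sum_le_sum (s := Finset.univ) (fun v _ => key v)
    rw [hS] at hsumkey
    rw [Finset.sum_add_distrib, Finset.sum_const, ← Finset.mul_sum, Finset.card_univ] at hsumkey
    -- hsumkey : 2E q^E + (NE - 2E) p^E ≤ E * ∑ + N • (2 E^2 |p-q|)
    have hsmul : (N : ℕ) • (2 * (E : ℝ) ^ 2 * |p - q|) = (N : ℝ) * (2 * (E : ℝ) ^ 2 * |p - q|) := by
      rw [nsmul_eq_mul]
    rw [hNdef] at hsmul
    rw [hsmul] at hsumkey
    have hfin : (E : ℝ) * (2 * q ^ E + ((N : ℝ) - 2) * p ^ E - 2 * N * E * |p - q|)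
        ≤ (E : ℝ) * ∑ v, q ^ G.degree v * p ^ (E - G.degree v) := by
      have : (E : ℝ) * (2 * q ^ E + ((N : ℝ) - 2) * p ^ E - 2 * N * E * |p - q|)
          = 2 * (E : ℝ) * q ^ E + ((N : ℝ) * E - 2 * E) * p ^ E
            - (N : ℝ) * (2 * (E : ℝ) ^ 2 * |p - q|) := by ring
      rw [this]
      linarith
    exact le_of_mul_le_mul_left hfin hER
  · -- upper bound
    have key : ∀ v, (E : ℝ) * (q ^ G.degree v * p ^ (E - G.degree v)) ≤
        (G.degree v : ℝ) * q ^ E + ((E : ℝ) - G.degree v) * p ^ E :=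
      fun v => aux_young E (G.degree v) (hdle v) p q hp0 hq0
    have keyj : (E : ℝ) * (q ^ G.degree j * p ^ (E - G.degree j)) + |p - q| ^ E ≤
        (G.degree j : ℝ) * q ^ E + ((E : ℝ) - G.degree j) * p ^ E :=
      aux_youngStrong E (G.degree j) hj1 hj2 p q hp0 hq0
    have hsplit1 : ∑ v, (E : ℝ) * (q ^ G.degree v * p ^ (E - G.degree v))
        = (E : ℝ) * (q ^ G.degree j * p ^ (E - G.degree j))
          + ∑ v ∈ Finset.univ.erase j, (E : ℝ) * (q ^ G.degree v * p ^ (E - G.degree v)) :=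
      (Finset.add_sum_erase _ _ (Finset.mem_univ j)).symm
    have hsplit2 : ∑ v, ((G.degree v : ℝ) * q ^ E + ((E : ℝ) - G.degree v) * p ^ E)
        = ((G.degree j : ℝ) * q ^ E + ((E : ℝ) - G.degree j) * p ^ E)
          + ∑ v ∈ Finset.univ.erase j,
            ((G.degree v : ℝ) * q ^ E + ((E : ℝ) - G.degree v) * p ^ E) :=
      (Finset.add_sum_erase _ _ (Finset.mem_univ j)).symm
    have hrest : ∑ v ∈ Finset.univ.erase j, (E : ℝ) * (q ^ G.degree v * p ^ (E - G.degree v))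
        ≤ ∑ v ∈ Finset.univ.erase j,
            ((G.degree v : ℝ) * q ^ E + ((E : ℝ) - G.degree v) * p ^ E) :=
      Finset.sum_le_sum (fun v _ => key v)
    have htot : ∑ v, (E : ℝ) * (q ^ G.degree v * p ^ (E - G.degree v)) + |p - q| ^ E
        ≤ 2 * (E : ℝ) * q ^ E + ((N : ℝ) * E - 2 * E) * p ^ E := by
      rw [hsplit1, ← hS, hsplit2]
      linarith
    rw [← Finset.mul_sum] at htot
    have hzeta : (E : ℝ) * (|p - q| ^ E / E) = |p - q| ^ E := by
      field_simp
    have hfin : (E : ℝ) * (∑ v, q ^ G.degree v * p ^ (E - G.degree v))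
        ≤ (E : ℝ) * (2 * q ^ E + ((N : ℝ) - 2) * p ^ E - |p - q| ^ E / E) := by
      have : (E : ℝ) * (2 * q ^ E + ((N : ℝ) - 2) * p ^ E - |p - q| ^ E / E)
          = 2 * (E : ℝ) * q ^ E + ((N : ℝ) * E - 2 * E) * p ^ E - (E : ℝ) * (|p - q| ^ E / E) := by
        ring
      rw [this, hzeta]
      linarith
    exact le_of_mul_le_mul_left hfin hER
end

section
/- Fix S ⊆ [n] with |S| = r ≤ n/2, fix the edges inside Sᶜ, and for each u ∈ S let q_u ∈ {0, 1/n, …, 1} with q_u·n an integer and q_u·n ≤ n−r. Let H_cav(q_S) = ∏_{u∈S} C(n−r, q_u n) be the number of configurations of the cavity edges (edges with an endpoint in S going to Sᶜ) such that the normalized restricted degree of u equals q_u for every u ∈ S. Then exp(−r²[4 + 2log(n/r)] − (r/2)log(2n)) ≤ H_cav(q_S)·exp(2n∑_{u∈S} I(q_u)) ≤ 1. -/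
/-- `I(p) = (1/2) p log p + (1/2)(1-p)log(1-p)`, minus one half the binary entropy. -/
noncomputable def Ient (p : ℝ) : ℝ :=
  p * Real.log p / 2 + (1 - p) * Real.log (1 - p) / 2

open Real Finset

lemma Ient_nat (N j : ℕ) (hN : 0 < N) (hj : j ≤ N) :
    2 * (N : ℝ) * Ient ((j : ℝ) / N) = j * Real.log j + ((N - j : ℕ) : ℝ) * Real.log ((N - j : ℕ) : ℝ)
      - N * Real.log N := by
  have hN' : (N : ℝ) ≠ 0 := Nat.cast_ne_zero.mpr hN.ne'
  have hNj : ((N - j : ℕ) : ℝ) = (N : ℝ) - j := by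
    push_cast [Nat.cast_sub hj]; ring
  have h1 : 1 - (j : ℝ) / N = ((N : ℝ) - j) / N := by field_simp
  have hlog1 : (j : ℝ) * Real.log ((j : ℝ) / N) = j * Real.log j - j * Real.log N := by
    rcases Nat.eq_zero_or_pos j with h | h
    · simp [h]
    · rw [Real.log_div (Nat.cast_ne_zero.mpr h.ne') hN']; ring
  have hlog2 : ((N : ℝ) - j) * Real.log (((N : ℝ) - j) / N)
      = ((N : ℝ) - j) * Real.log ((N : ℝ) - j) - ((N : ℝ) - j) * Real.log N := by
    rcases eq_or_lt_of_le (Nat.cast_le.mpr hj : (j : ℝ) ≤ N) with h | h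
    · simp [← h]
    · rw [Real.log_div (by linarith) hN']; ring
  unfold Ient
  rw [h1]
  have : 2 * (N : ℝ) * ((j : ℝ) / N * Real.log ((j : ℝ)/N) / 2
      + ((N:ℝ) - j)/N * Real.log (((N:ℝ) - j)/N) / 2)
      = (j : ℝ) * Real.log ((j : ℝ)/N) + ((N:ℝ) - j) * Real.log (((N:ℝ)-j)/N) := by
    field_simp
  rw [hNj, this, hlog1, hlog2]
  have : (j : ℝ) + ((N:ℝ) - j) = N := by ring
  nlinarith [this]

lemma Ient_exp (N j : ℕ) (hN : 0 < N) (hj : j ≤ N) :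
    Real.exp (2 * (N : ℝ) * Ient ((j : ℝ) / N)) =
      ((j : ℝ)/N) ^ j * (1 - (j : ℝ)/N) ^ (N - j) := by
  have hN' : (N : ℝ) ≠ 0 := Nat.cast_ne_zero.mpr hN.ne'
  have key : 2 * (N : ℝ) * Ient ((j : ℝ) / N)
      = j * Real.log ((j:ℝ)/N) + ((N - j : ℕ) : ℝ) * Real.log (1 - (j:ℝ)/N) := by
    unfold Ient
    have hNj : ((N - j : ℕ) : ℝ) = (N : ℝ) - j := by push_cast [Nat.cast_sub hj]; ring
    rw [hNj]; field_simp
  rw [key, Real.exp_add]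
  congr 1
  · rcases Nat.eq_zero_or_pos j with h | h
    · simp [h]
    · rw [mul_comm, Real.exp_mul, Real.exp_log (by positivity), Real.rpow_natCast]
  · rcases eq_or_lt_of_le (Nat.cast_le.mpr hj : (j : ℝ) ≤ N) with h | h
    · have h1 : (j:ℝ)/N = 1 := by rw [h, div_self hN']
      have hNj : N - j = 0 := by
        have := Nat.cast_inj (R := ℝ) |>.mp h; omega
      simp [hNj, h1]
    · have h1 : 0 < 1 - (j:ℝ)/N := by
        rw [sub_pos, div_lt_one (by positivity)]; exact h
      rw [mul_comm, Real.exp_mul, Real.exp_log h1, Real.rpow_natCast]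

lemma choose_mul_le_one (k j : ℕ) (p : ℝ) (hp0 : 0 ≤ p) (hp1 : p ≤ 1) (hj : j ≤ k) :
    (k.choose j : ℝ) * (p ^ j * (1 - p) ^ (k - j)) ≤ 1 := by
  have hb := add_pow p (1-p) k
  have hmem : j ∈ Finset.range (k+1) := Finset.mem_range.mpr (Nat.lt_succ_of_le hj)
  have hsingle := Finset.single_le_sum
    (f := fun i => p ^ i * (1-p) ^ (k - i) * (k.choose i : ℝ))
    (fun i _ => mul_nonneg (mul_nonneg (pow_nonneg hp0 _)
      (pow_nonneg (by linarith) _)) (Nat.cast_nonneg _)) hmem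
  rw [← hb] at hsingle
  calc (k.choose j : ℝ) * (p ^ j * (1 - p) ^ (k - j))
      = p ^ j * (1-p) ^ (k-j) * (k.choose j : ℝ) := by ring
    _ ≤ (p + (1-p))^k := hsingle
    _ = 1 := by norm_num

lemma choose_term_step_up (k j i : ℕ) (hij : i < j) (hj : j ≤ k) :
    k.choose i * (k - j) ≤ k.choose (i+1) * j := by
  have hkey : (k - j) * (i+1) ≤ (k - i) * j :=
    Nat.mul_le_mul (Nat.sub_le_sub_left (le_of_lt hij) k) hij
  have hid : k.choose (i+1) * (i+1) = k.choose i * (k - i) := Nat.choose_succ_right_eq k i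
  have : k.choose i * (k - j) * (i+1) ≤ k.choose (i+1) * j * (i+1) := by
    calc k.choose i * (k - j) * (i+1) = k.choose i * ((k-j) * (i+1)) := by ring
      _ ≤ k.choose i * ((k-i) * j) := Nat.mul_le_mul_left _ hkey
      _ = k.choose i * (k - i) * j := by ring
      _ = k.choose (i+1) * (i+1) * j := by rw [hid]
      _ = k.choose (i+1) * j * (i+1) := by ring
  exact Nat.le_of_mul_le_mul_right this (Nat.succ_pos i)

lemma choose_term_step_down (k j i : ℕ) (hji : j ≤ i) (hik : i < k) :
    k.choose (i+1) * j ≤ k.choose i * (k - j) := by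
  have hkey : (k - i) * j ≤ (k - j) * (i+1) :=
    Nat.mul_le_mul (Nat.sub_le_sub_left hji k) (Nat.le_succ_of_le hji)
  have hid : k.choose (i+1) * (i+1) = k.choose i * (k - i) := Nat.choose_succ_right_eq k i
  have : k.choose (i+1) * j * (i+1) ≤ k.choose i * (k - j) * (i+1) := by
    calc k.choose (i+1) * j * (i+1) = k.choose (i+1) * (i+1) * j := by ring
      _ = k.choose i * (k - i) * j := by rw [hid]
      _ = k.choose i * ((k-i) * j) := by ring
      _ ≤ k.choose i * ((k-j) * (i+1)) := Nat.mul_le_mul_left _ hkey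
      _ = k.choose i * (k - j) * (i+1) := by ring
  exact Nat.le_of_mul_le_mul_right this (Nat.succ_pos i)

/-- `t i ≤ t j` where `t i = C(k,i) j^i (k-j)^(k-i)`. -/
lemma choose_term_le_mode (k j i : ℕ) (hj : j ≤ k) (hi : i ≤ k) :
    k.choose i * j ^ i * (k - j) ^ (k - i) ≤ k.choose j * j ^ j * (k - j) ^ (k - j) := by
  set t : ℕ → ℕ := fun i => k.choose i * j ^ i * (k - j) ^ (k - i) with ht
  have step_up : ∀ i, i < j → t i ≤ t (i+1) := by
    intro i hij
    have h1 : k - i = (k - (i+1)) + 1 := by omega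
    show k.choose i * j ^ i * (k - j) ^ (k - i) ≤ k.choose (i+1) * j ^ (i+1) * (k - j) ^ (k - (i+1))
    rw [h1, pow_succ, pow_succ]
    calc k.choose i * j ^ i * ((k-j) ^ (k - (i+1)) * (k-j))
        = (k.choose i * (k - j)) * (j ^ i * (k-j) ^ (k - (i+1))) := by ring
      _ ≤ (k.choose (i+1) * j) * (j ^ i * (k-j) ^ (k - (i+1))) :=
          Nat.mul_le_mul_right _ (choose_term_step_up k j i hij hj)
      _ = k.choose (i+1) * (j ^ i * j) * (k - j) ^ (k - (i+1)) := by ring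
  have step_down : ∀ i, j ≤ i → i < k → t (i+1) ≤ t i := by
    intro i hji hik
    have h1 : k - i = (k - (i+1)) + 1 := by omega
    show k.choose (i+1) * j ^ (i+1) * (k - j) ^ (k - (i+1)) ≤ k.choose i * j ^ i * (k - j) ^ (k - i)
    rw [h1, pow_succ, pow_succ]
    calc k.choose (i+1) * (j ^ i * j) * (k-j) ^ (k - (i+1))
        = (k.choose (i+1) * j) * (j ^ i * (k-j) ^ (k - (i+1))) := by ring
      _ ≤ (k.choose i * (k - j)) * (j ^ i * (k-j) ^ (k - (i+1))) :=
          Nat.mul_le_mul_right _ (choose_term_step_down k j i hji hik)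
      _ = k.choose i * j ^ i * ((k-j) ^ (k - (i+1)) * (k-j)) := by ring
  rcases le_or_gt i j with h | h
  · -- upward: t (j - d) ≤ t j
    have up : ∀ d, d ≤ j → t (j - d) ≤ t j := by
      intro d
      induction d with
      | zero => simp
      | succ d ih =>
        intro hd
        have h1 : j - (d+1) < j := by omega
        have h2 : j - (d+1) + 1 = j - d := by omega
        calc t (j - (d+1)) ≤ t (j - (d+1) + 1) := step_up _ h1
          _ = t (j - d) := by rw [h2]
          _ ≤ t j := ih (by omega)
    have := up (j - i) (by omega)
    rwa [Nat.sub_sub_self h] at this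
  · have down : ∀ d, j + d ≤ k → t (j + d) ≤ t j := by
      intro d
      induction d with
      | zero => simp
      | succ d ih =>
        intro hd
        have h1 : j + (d+1) = (j+d) + 1 := by omega
        calc t (j + (d+1)) = t ((j+d)+1) := by rw [h1]
          _ ≤ t (j + d) := step_down _ (by omega) (by omega)
          _ ≤ t j := ih (by omega)
    have := down (i - j) (by omega)
    rwa [Nat.add_sub_cancel' (le_of_lt h)] at this

lemma term_ge (k j : ℕ) (hk : 0 < k) (hj : j ≤ k) :
    1 / ((k : ℝ) + 1) ≤ (k.choose j : ℝ) * Real.exp (2 * (k : ℝ) * Ient ((j : ℝ) / k)) := by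
  have hk' : (k : ℝ) ≠ 0 := Nat.cast_ne_zero.mpr hk.ne'
  have hq : (1 : ℝ) - (j : ℝ)/k = ((k - j : ℕ) : ℝ) / k := by
    push_cast [Nat.cast_sub hj]; field_simp
  rw [Ient_exp k j hk hj, hq]
  -- each binomial term with p = j/k is at most the mode term
  have hterm : ∀ i ∈ Finset.range (k+1),
      ((j:ℝ)/k) ^ i * (((k - j : ℕ):ℝ)/k) ^ (k - i) * (k.choose i : ℝ)
        ≤ (k.choose j : ℝ) * (((j:ℝ)/k) ^ j * (((k - j : ℕ):ℝ)/k) ^ (k - j)) := by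
    intro i hi
    have hi' : i ≤ k := by simpa [Nat.lt_succ_iff] using Finset.mem_range.mp hi
    have hcast := choose_term_le_mode k j i hj hi'
    have hcastR : (k.choose i : ℝ) * (j:ℝ) ^ i * ((k - j : ℕ):ℝ) ^ (k - i)
        ≤ (k.choose j : ℝ) * (j:ℝ) ^ j * ((k - j : ℕ):ℝ) ^ (k - j) := by
      exact_mod_cast hcast
    have hpow : ∀ a b : ℕ, a + b = k → ((j:ℝ)/k) ^ a * (((k - j : ℕ):ℝ)/k) ^ b
        = (j:ℝ) ^ a * ((k - j : ℕ):ℝ) ^ b / (k:ℝ) ^ k := by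
      intro a b hab
      rw [div_pow, div_pow, div_mul_div_comm, ← pow_add, hab]
    rw [mul_comm (((j:ℝ)/k) ^ i * _) _, hpow i (k - i) (by omega), hpow j (k - j) (by omega)]
    rw [mul_div_assoc' , mul_div_assoc']
    apply div_le_div_of_nonneg_right ?_ (by positivity) |>.trans_eq rfl
    · calc (k.choose i : ℝ) * ((j:ℝ) ^ i * ((k - j : ℕ):ℝ) ^ (k - i))
          = (k.choose i : ℝ) * (j:ℝ) ^ i * ((k - j : ℕ):ℝ) ^ (k - i) := by ring
        _ ≤ (k.choose j : ℝ) * (j:ℝ) ^ j * ((k - j : ℕ):ℝ) ^ (k - j) := hcastR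
        _ = (k.choose j : ℝ) * ((j:ℝ) ^ j * ((k - j : ℕ):ℝ) ^ (k - j)) := by ring
  have hsum : (1 : ℝ) = ∑ i ∈ Finset.range (k+1),
      ((j:ℝ)/k) ^ i * (((k - j : ℕ):ℝ)/k) ^ (k - i) * (k.choose i : ℝ) := by
    have hb := add_pow ((j:ℝ)/k) (((k - j : ℕ):ℝ)/k) k
    have hone : (j:ℝ)/k + ((k - j : ℕ):ℝ)/k = 1 := by
      rw [← add_div]
      rw [div_eq_one_iff_eq hk']
      push_cast [Nat.cast_sub hj]; ring
    rw [hone, one_pow] at hb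
    exact hb
  have hcard := Finset.sum_le_card_nsmul (Finset.range (k+1)) _ _ hterm
  rw [← hsum, Finset.card_range] at hcard
  rw [div_le_iff₀ (by positivity)]
  calc (1:ℝ) ≤ (k+1) • ((k.choose j : ℝ) * (((j:ℝ)/k) ^ j * (((k - j : ℕ):ℝ)/k) ^ (k - j))) := hcard
    _ = (k.choose j : ℝ) * (((j:ℝ)/k) ^ j * (((k - j : ℕ):ℝ)/k) ^ (k - j)) * ((k:ℝ) + 1) := by
        rw [nsmul_eq_mul]; push_cast; ring

lemma Ient_diff (n r j : ℕ) (hr : 0 < r) (hrn : 2 * r ≤ n) (hj : j ≤ n - r) :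
    2 * ((n - r : ℕ) : ℝ) * Ient ((j : ℝ) / ((n - r : ℕ) : ℝ))
      - (r : ℝ) * (1 + Real.log ((n : ℝ) / r))
    ≤ 2 * (n : ℝ) * Ient ((j : ℝ) / n) := by
  set k := n - r with hk
  have hkpos : 0 < k := by omega
  have hnpos : 0 < n := by omega
  have hjn : j ≤ n := by omega
  rw [Ient_nat n j hnpos hjn, Ient_nat k j hkpos hj]
  set a := k - j with ha
  have hnj : n - j = a + r := by omega
  have hn_eq : (n : ℝ) = (k : ℝ) + r := by push_cast [hk, Nat.cast_sub (by omega : r ≤ n)]; ring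
  rw [hnj]
  -- goal: j log j + a log a - k log k - r(1 + log(n/r)) ≤ j log j + (a+r) log (a+r) - n log n
  have hlogdiv : Real.log ((n:ℝ)/r) = Real.log n - Real.log r :=
    Real.log_div (Nat.cast_ne_zero.mpr hnpos.ne') (Nat.cast_ne_zero.mpr hr.ne')
  rw [hlogdiv]
  -- term 1 : (a+r) log(a+r) ≥ a log a + r log r
  have t1 : (a : ℝ) * Real.log a + r * Real.log r ≤ ((a + r : ℕ) : ℝ) * Real.log ((a + r : ℕ) : ℝ) := by
    rcases Nat.eq_zero_or_pos a with h0 | hapos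
    · simp [h0]
    · push_cast
      have h1 : Real.log a ≤ Real.log ((a:ℝ) + r) := by
        apply Real.log_le_log (by exact_mod_cast hapos) (by push_cast; linarith [Nat.cast_nonneg (α := ℝ) r])
      have h2 : Real.log r ≤ Real.log ((a:ℝ) + r) := by
        apply Real.log_le_log (by exact_mod_cast hr) (by linarith [Nat.cast_nonneg (α := ℝ) a])
      have ha0 : (0:ℝ) ≤ a := Nat.cast_nonneg a
      have hr0 : (0:ℝ) ≤ r := Nat.cast_nonneg r
      nlinarith
  -- term 2 : k log(n/k) ≤ r  i.e.  k log n - k log k ≤ r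
  have t2 : (k : ℝ) * Real.log n - k * Real.log k ≤ r := by
    have hklog : Real.log ((n:ℝ)/k) ≤ (n:ℝ)/k - 1 :=
      Real.log_le_sub_one_of_pos (by positivity)
    have hkR : (0:ℝ) < k := by exact_mod_cast hkpos
    have hdiv : Real.log ((n:ℝ)/k) = Real.log n - Real.log k :=
      Real.log_div (Nat.cast_ne_zero.mpr hnpos.ne') (Nat.cast_ne_zero.mpr hkpos.ne')
    rw [hdiv] at hklog
    have := mul_le_mul_of_nonneg_left hklog (le_of_lt hkR)
    have hfield : (k:ℝ) * ((n:ℝ)/k - 1) = (n:ℝ) - k := by field_simp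
    rw [hfield] at this
    linarith [hn_eq]
  have hnlog : (n:ℝ) * Real.log n = k * Real.log n + r * Real.log n := by rw [hn_eq]; ring
  linarith [t1, t2]

lemma budget (n r : ℕ) (hr : 0 < r) (hrn : 2 * r ≤ n) :
    Real.log (((n - r : ℕ) : ℝ) + 1) ≤ (r : ℝ) * (3 + Real.log ((n:ℝ)/r)) + Real.log (2 * n) / 2 := by
  have hnpos : 0 < n := by omega
  have hn1 : (1:ℝ) ≤ n := by exact_mod_cast hnpos
  have hr1 : (1:ℝ) ≤ r := by exact_mod_cast hr
  have hL0 : 0 ≤ Real.log ((n:ℝ)/r) := by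
    apply Real.log_nonneg
    rw [le_div_iff₀ (by linarith)]
    have : (2:ℝ) * r ≤ n := by exact_mod_cast hrn
    linarith
  set L := Real.log ((n:ℝ)/r) with hLdef
  have hLsplit : L = Real.log n - Real.log r :=
    Real.log_div (by positivity) (by positivity)
  have h1 : Real.log (((n - r : ℕ) : ℝ) + 1) ≤ Real.log (2 * n) := by
    apply Real.log_le_log (by positivity)
    have : ((n - r : ℕ) : ℝ) ≤ n := by exact_mod_cast Nat.sub_le n r
    linarith
  have hlog2n : Real.log (2 * (n:ℝ)) = Real.log 2 + Real.log n :=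
    Real.log_mul (by norm_num) (by positivity)
  have hlog2 : Real.log (2:ℝ) ≤ 1 := by
    have := Real.log_le_sub_one_of_pos (by norm_num : (0:ℝ) < 2); linarith
  -- suffices : log(2n)/2 ≤ 3r + rL
  have key : Real.log (2 * (n:ℝ)) / 2 ≤ 3 * r + r * L := by
    rcases le_or_gt ((r:ℝ)^2) n with hcase | hcase
    · -- log r ≤ (1/2) log n, so L ≥ (1/2) log n, and rL ≥ L
      have h2 : 2 * Real.log r ≤ Real.log n := by
        have := Real.log_le_log (by positivity : (0:ℝ) < (r:ℝ)^2) hcase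
        rwa [Real.log_pow, Nat.cast_ofNat] at this
      have hrL : L ≤ r * L := le_mul_of_one_le_left hL0 hr1
      have : Real.log n / 2 ≤ L := by rw [hLsplit]; linarith
      rw [hlog2n]
      nlinarith
    · -- n < r², so log(2n) ≤ log 2 + 2 log r ≤ 1 + 2(r-1) ≤ 2r
      have hlogr : Real.log r ≤ (r:ℝ) - 1 := by
        have := Real.log_le_sub_one_of_pos (by positivity : (0:ℝ) < r); linarith
      have h2 : Real.log n ≤ 2 * Real.log r := by
        have := Real.log_le_log (by linarith : (0:ℝ) < n) (le_of_lt hcase)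
        rwa [Real.log_pow, Nat.cast_ofNat] at this
      have : Real.log (2 * (n:ℝ)) ≤ 2 * r := by rw [hlog2n]; nlinarith
      nlinarith [mul_nonneg (by linarith : (0:ℝ) ≤ (r:ℝ)) hL0]
  linarith

lemma term_le_one (n k j : ℕ) (hn : 0 < n) (hk : k ≤ n) (hj : j ≤ k) :
    ((k.choose j : ℕ) : ℝ) * Real.exp (2 * (n : ℝ) * Ient ((j : ℝ) / n)) ≤ 1 := by
  have hjn : j ≤ n := hj.trans hk
  rw [Ient_exp n j hn hjn]
  set p := (j : ℝ) / n with hp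
  have hp0 : 0 ≤ p := by positivity
  have hp1 : p ≤ 1 := by
    rw [hp, div_le_one (by exact_mod_cast hn)]; exact_mod_cast hjn
  have hsplit : n - j = (k - j) + (n - k) := by omega
  rw [hsplit, pow_add]
  calc (k.choose j : ℝ) * (p ^ j * ((1 - p) ^ (k - j) * (1 - p) ^ (n - k)))
      = (k.choose j : ℝ) * (p ^ j * (1 - p) ^ (k - j)) * (1 - p) ^ (n - k) := by ring
    _ ≤ 1 * 1 := by
        apply mul_le_mul (choose_mul_le_one k j p hp0 hp1 hj)
          (pow_le_one₀ (by linarith) (by linarith)) (pow_nonneg (by linarith) _)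
        norm_num
    _ = 1 := by norm_num

lemma term_lower (n r j : ℕ) (hr : 0 < r) (hrn : 2 * r ≤ n) (hj : j ≤ n - r) :
    Real.exp (-(r:ℝ) * (4 + 2 * Real.log ((n:ℝ)/r)) - Real.log (2 * n) / 2)
      ≤ (((n - r).choose j : ℕ) : ℝ) * Real.exp (2 * (n : ℝ) * Ient ((j : ℝ) / n)) := by
  set k := n - r with hk
  have hkpos : 0 < k := by omega
  set L := Real.log ((n:ℝ)/r) with hL
  set Ik := 2 * ((k : ℕ) : ℝ) * Ient ((j : ℝ) / (k : ℝ)) with hIk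
  set In := 2 * (n : ℝ) * Ient ((j : ℝ) / n) with hIn
  have hdiff : Ik - (r : ℝ) * (1 + L) ≤ In := Ient_diff n r j hr hrn hj
  have hge := term_ge k j hkpos hj
  have hCpos : (0:ℝ) < (k.choose j : ℝ) := by
    exact_mod_cast Nat.choose_pos hj
  calc Real.exp (-(r:ℝ) * (4 + 2*L) - Real.log (2 * n) / 2)
      ≤ Real.exp (-Real.log ((k:ℝ)+1) - (r:ℝ) * (1 + L)) := by
        apply Real.exp_le_exp.mpr
        have := budget n r hr hrn
        rw [← hk] at this
        linarith
    _ = Real.exp (-Real.log ((k:ℝ)+1)) * Real.exp (-(r:ℝ)*(1+L)) := by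
        rw [← Real.exp_add]; ring_nf
    _ = (1 / ((k:ℝ)+1)) * Real.exp (-(r:ℝ)*(1+L)) := by
        rw [Real.exp_neg, Real.exp_log (by positivity)]; ring
    _ ≤ ((k.choose j : ℝ) * Real.exp Ik) * Real.exp (-(r:ℝ)*(1+L)) := by
        apply mul_le_mul_of_nonneg_right hge (le_of_lt (Real.exp_pos _))
    _ = (k.choose j : ℝ) * Real.exp (Ik - (r:ℝ)*(1+L)) := by
        rw [mul_assoc, ← Real.exp_add]; ring_nf
    _ ≤ (k.choose j : ℝ) * Real.exp In := by
        apply mul_le_mul_of_nonneg_left (Real.exp_le_exp.mpr hdiff) (le_of_lt hCpos)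

theorem stmt_13 (n r : ℕ) (hn : 0 < n) (hr : 2 * r ≤ n)
    (m : Fin r → ℕ) (hm : ∀ u, m u ≤ n - r) :
    Real.exp (-(r : ℝ) ^ 2 * (4 + 2 * Real.log ((n : ℝ) / r))
        - (r : ℝ) / 2 * Real.log (2 * n)) ≤
      (∏ u, ((n - r).choose (m u) : ℝ)) *
        Real.exp (2 * n * ∑ u, Ient ((m u : ℝ) / n)) ∧
    (∏ u, ((n - r).choose (m u) : ℝ)) *
        Real.exp (2 * n * ∑ u, Ient ((m u : ℝ) / n)) ≤ 1 := by
  rcases Nat.eq_zero_or_pos r with hr0 | hrpos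
  · subst hr0
    simp
  have hprod : (∏ u, ((n - r).choose (m u) : ℝ)) *
      Real.exp (2 * n * ∑ u, Ient ((m u : ℝ) / n))
      = ∏ u, (((n - r).choose (m u) : ℝ) * Real.exp (2 * (n:ℝ) * Ient ((m u : ℝ) / n))) := by
    rw [Finset.prod_mul_distrib, ← Real.exp_sum, Finset.mul_sum]
  rw [hprod]
  constructor
  · calc Real.exp (-(r : ℝ) ^ 2 * (4 + 2 * Real.log ((n : ℝ) / r)) - (r : ℝ) / 2 * Real.log (2 * n))
        = (Real.exp (-(r:ℝ) * (4 + 2 * Real.log ((n:ℝ)/r)) - Real.log (2 * n) / 2)) ^ r := by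
          rw [← Real.exp_nat_mul]; congr 1; ring
      _ = ∏ _u : Fin r, Real.exp (-(r:ℝ) * (4 + 2 * Real.log ((n:ℝ)/r)) - Real.log (2 * n) / 2) := by
          rw [Finset.prod_const, Finset.card_univ, Fintype.card_fin]
      _ ≤ ∏ u, (((n - r).choose (m u) : ℝ) * Real.exp (2 * (n:ℝ) * Ient ((m u : ℝ) / n))) := by
          apply Finset.prod_le_prod (fun u _ => le_of_lt (Real.exp_pos _))
          exact fun u _ => term_lower n r (m u) hrpos hr (hm u)
  · apply Finset.prod_le_one
    · exact fun u _ => by positivity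
    · exact fun u _ => term_le_one n (n - r) (m u) hn (Nat.sub_le n r) (hm u)
end

section
/- For 1/2 ≤ q ≤ 1 and 0 ≤ q_u ≤ q, |2q·I(q_u/q) − 2I(q_u)| ≤ (2 + log(1/(1−q)))·(1−q), where I(p) = (1/2)p log p + (1/2)(1−p)log(1−p). -/
lemma mul_log_div' (x y : ℝ) (hy : y ≠ 0) :
    x * Real.log (x / y) = x * Real.log x - x * Real.log y := by
  rcases eq_or_ne x 0 with rfl | hx
  · simp
  · rw [Real.log_div hx hy]; ring

lemma shift_bound (a e : ℝ) (ha : 0 ≤ a) (he : 0 < e) (hab : a + e ≤ 1) :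
    e * Real.log e ≤ (a + e) * Real.log (a + e) - a * Real.log a ∧
    (a + e) * Real.log (a + e) - a * Real.log a ≤ e := by
  have hlogae : Real.log (a + e) ≤ 0 := Real.log_nonpos (by linarith) hab
  rcases eq_or_lt_of_le ha with rfl | ha'
  · have hle : Real.log e ≤ 0 := by simpa using hlogae
    simp only [zero_add, zero_mul, sub_zero]
    exact ⟨le_refl _, by nlinarith⟩
  · have hae : 0 < a + e := by linarith
    have h1 : Real.log ((a + e) / a) ≤ (a + e) / a - 1 :=
      Real.log_le_sub_one_of_pos (by positivity)
    rw [Real.log_div hae.ne' ha'.ne'] at h1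
    have h2 : (a + e) / a - 1 = e / a := by field_simp; ring
    rw [h2] at h1
    have h3 : Real.log a ≤ Real.log (a + e) := Real.log_le_log ha' (by linarith)
    have h4 : Real.log e ≤ Real.log (a + e) := Real.log_le_log he (by linarith)
    constructor
    · nlinarith [h3, h4, he.le]
    · have h5 : a * (Real.log (a + e) - Real.log a) ≤ a * (e / a) := by
        apply mul_le_mul_of_nonneg_left h1 ha
      have h6 : a * (e / a) = e := by field_simp
      nlinarith [mul_nonpos_of_nonneg_of_nonpos he.le hlogae]

theorem stmt_14 (q qu : ℝ) (hq1 : 1 / 2 ≤ q) (hq2 : q ≤ 1)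
    (hqu0 : 0 ≤ qu) (hqu : qu ≤ q) :
    |2 * q * Ient (qu / q) - 2 * Ient qu| ≤
      (2 + Real.log (1 / (1 - q))) * (1 - q) := by
  rcases eq_or_lt_of_le hq2 with rfl | hqlt
  · simp [Ient]
  · have hq0 : (0:ℝ) < q := by linarith
    have hqne : q ≠ 0 := hq0.ne'
    set e := 1 - q with hedef
    have he : 0 < e := by simp [hedef]; linarith
    have he2 : e ≤ 1/2 := by simp [hedef]; linarith
    have h1 : (1:ℝ) - qu/q = (q-qu)/q := by field_simp
    have e2 : qu/q * Real.log (qu/q) = (qu * Real.log qu - qu * Real.log q)/q := by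
      rw [← mul_log_div' qu q hqne]; ring
    have e3 : (q-qu)/q * Real.log ((q-qu)/q)
        = ((q-qu) * Real.log (q-qu) - (q-qu) * Real.log q)/q := by
      rw [← mul_log_div' (q-qu) q hqne]; ring
    have key : 2*q*Ient (qu/q) - 2*Ient qu
        = (q-qu)*Real.log (q-qu) - (1-qu)*Real.log (1-qu) - q*Real.log q := by
      unfold Ient
      rw [h1, e2, e3]
      field_simp
      ring
    -- bounds on q * log q
    have hlogq : Real.log q ≤ 0 := Real.log_nonpos hq0.le hq2
    have hBu : q * Real.log q ≤ 0 := mul_nonpos_of_nonneg_of_nonpos hq0.le hlogq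
    have hBl : -e ≤ q * Real.log q := by
      have h := Real.log_le_sub_one_of_pos (show (0:ℝ) < 1/q by positivity)
      rw [Real.log_div one_ne_zero hqne, Real.log_one] at h
      have h' : q * (0 - Real.log q) ≤ q * (1/q - 1) :=
        mul_le_mul_of_nonneg_left h hq0.le
      have h'' : q * (1/q - 1) = 1 - q := by field_simp
      rw [h''] at h'
      simp [hedef]; nlinarith
    -- bounds on (1-qu) log(1-qu) - (q-qu) log(q-qu)
    have hsb := shift_bound (q - qu) e (by linarith) he (by rw [hedef]; linarith)
    have hab : q - qu + e = 1 - qu := by rw [hedef]; ring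
    rw [hab] at hsb
    obtain ⟨hA1, hA2⟩ := hsb
    -- rewrite RHS log
    have hrhs : Real.log (1 / (1 - q)) = -Real.log e := by
      rw [one_div, Real.log_inv, hedef]
    have hloge : Real.log e ≤ 0 := Real.log_nonpos he.le (by linarith)
    have heloge : e * Real.log e ≤ 0 := mul_nonpos_of_nonneg_of_nonpos he.le hloge
    rw [key, hrhs, abs_le]
    constructor
    · nlinarith
    · nlinarith
end
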